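/- arXiv:2303.15835 — 2 statements merged into one kernel-verified Lean document; each statement's English description precedes it below -/
import Mathlib

section
/- For real parameters α₁, α₂, α₃, k with α₁α₂α₃ ≠ 0 and any x ∈ ℝ³, the matrix-vector product P₁(x) · (α₂x¹, -α₁x², -kα₁/α₃)ᵀ equals the zero vector, i.e. C₁ is a Casimir of the first Poisson realization. -/
/-!
P₁(x) is the cross-product matrix of ω = (α₃/α₁) · ∇C₁(x), so P₁(x) · ∇C₁(x) = (α₃/α₁) ∇C₁(x) × ∇C₁(x) = 0.
-/

open Matrix

variable {R : Type*} [CommRing R]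

def crossMatrix (ω : Fin 3 → R) : Matrix (Fin 3) (Fin 3) R :=
  !![0, -ω 2, ω 1;
     ω 2, 0, -ω 0;
     -ω 1, ω 0, 0]

theorem crossMatrix_mulVec (ω v : Fin 3 → R) : crossMatrix ω *ᵥ v = ω ⨯₃ v := by
  ext i
  fin_cases i <;> simp [crossMatrix, cross_apply, mulVec, dotProduct, Fin.sum_univ_succ] <;> ring

theorem crossMatrix_smul_mulVec_self (c : R) (v : Fin 3 → R) :
    crossMatrix (c • v) *ᵥ v = 0 := by
  rw [crossMatrix_mulVec, map_smul, LinearMap.smul_apply, cross_self, smul_zero]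

theorem stmt_2 (α₁ α₂ α₃ k : ℝ) (hα : α₁ * α₂ * α₃ ≠ 0) (x : Fin 3 → ℝ) :
    (!![0, k, -α₃ * x 1;
        -k, 0, -(α₂ * α₃ / α₁) * x 0;
        α₃ * x 1, (α₂ * α₃ / α₁) * x 0, 0] : Matrix (Fin 3) (Fin 3) ℝ).mulVec
      ![α₂ * x 0, -α₁ * x 1, -k * α₁ / α₃] = 0 := by
  have h₁ : α₁ ≠ 0 := left_ne_zero_of_mul (left_ne_zero_of_mul hα)
  have h₃ : α₃ ≠ 0 := right_ne_zero_of_mul hα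
  have hP : (!![0, k, -α₃ * x 1;
        -k, 0, -(α₂ * α₃ / α₁) * x 0;
        α₃ * x 1, (α₂ * α₃ / α₁) * x 0, 0] : Matrix (Fin 3) (Fin 3) ℝ) =
      crossMatrix ((α₃ / α₁) • ![α₂ * x 0, -α₁ * x 1, -k * α₁ / α₃]) := by
    ext i j
    fin_cases i <;> fin_cases j <;> simp [crossMatrix] <;> field_simp
  rw [hP, crossMatrix_smul_mulVec_self]
end

section
/- For the Rabinovich system with one control (α₁ = 1, α₂ = -1, α₃ = 1): ẋ¹ = x²x³, ẋ² = -x¹x³ - kx¹, ẋ³ = x¹x², the quantities (x¹)² - (x³)² and (x¹)² + (x²)² + 2kx³ are conserved along any differentiable solution. -/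
theorem hasDerivAt_sq_sub_sq_zero {x1 x2 x3 : ℝ → ℝ} {t : ℝ}
    (h1 : HasDerivAt x1 (x2 t * x3 t) t) (h3 : HasDerivAt x3 (x1 t * x2 t) t) :
    HasDerivAt (fun t => (x1 t) ^ 2 - (x3 t) ^ 2) 0 t :=
  ((h1.fun_pow 2).fun_sub (h3.fun_pow 2)).congr_deriv (by ring)

theorem hasDerivAt_sq_add_sq_add_mul_zero {k : ℝ} {x1 x2 x3 : ℝ → ℝ} {t : ℝ}
    (h1 : HasDerivAt x1 (x2 t * x3 t) t) (h2 : HasDerivAt x2 (-(x1 t * x3 t) - k * x1 t) t)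
    (h3 : HasDerivAt x3 (x1 t * x2 t) t) :
    HasDerivAt (fun t => (x1 t) ^ 2 + (x2 t) ^ 2 + 2 * k * x3 t) 0 t :=
  (((h1.fun_pow 2).fun_add (h2.fun_pow 2)).fun_add (h3.const_mul (2 * k))).congr_deriv (by ring)

theorem stmt_18 (k : ℝ) (x1 x2 x3 : ℝ → ℝ)
    (h1 : ∀ t, HasDerivAt x1 (x2 t * x3 t) t)
    (h2 : ∀ t, HasDerivAt x2 (-(x1 t * x3 t) - k * x1 t) t)
    (h3 : ∀ t, HasDerivAt x3 (x1 t * x2 t) t) :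
    (∀ t, HasDerivAt (fun t => (x1 t) ^ 2 - (x3 t) ^ 2) 0 t) ∧
    (∀ t, HasDerivAt (fun t => (x1 t) ^ 2 + (x2 t) ^ 2 + 2 * k * x3 t) 0 t) :=
  ⟨fun t => hasDerivAt_sq_sub_sq_zero (h1 t) (h3 t),
    fun t => hasDerivAt_sq_add_sq_add_mul_zero (h1 t) (h2 t) (h3 t)⟩
end
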